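/- Let n ≥ 2 and let i, j ∈ {1,…,n−1}. Then the following two subsets of ℝ[X] × ℝ[X] are equal: { (det(X·I − A(i; ℓ, a)), det((X·I − A(i; ℓ, a))^{(1,n)})) : ℓ > 0, a_1 > 0, …, a_{n−1} > 0 } and { (det(X·I − A(j; ℓ, a)), det((X·I − A(j; ℓ, a))^{(1,n)})) : ℓ > 0, a_1 > 0, …, a_{n−1} > 0 }. That is, the path models with input in compartment 1, output in compartment n, and a single leak from compartment i, respectively compartment j, are indistinguishable: their coefficient maps restricted to positive parameters have the same image. -/

import Mathlib

open Polynomial Matrix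

/-- The path-with-leak compartmental matrix `A(i; ℓ, a)` for the directed path
`1 → 2 → ⋯ → n` with a leak from compartment `i`.  Compartment `k` (for
`1 ≤ k ≤ n`) is encoded as the index `k - 1 : Fin n`. -/
def pathLeak {R : Type*} [CommRing R] (n : ℕ) (i : ℕ) (l : R) (a : ℕ → R) :
    Matrix (Fin n) (Fin n) R :=
  Matrix.of fun u v =>
    if u = v then
      (if (u : ℕ) + 1 = n then 0
       else if (u : ℕ) + 1 = i then -l - a i
       else -a ((u : ℕ) + 1))
    else if (u : ℕ) = (v : ℕ) + 1 then a ((v : ℕ) + 1)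
    else 0

/-- `M^{(1,n)}`: the `(n-1)×(n-1)` matrix obtained from an `n×n` matrix `M`
by deleting row `1` (index `0`) and column `n` (index `n-1`). -/
def minor1n {S : Type*} {n : ℕ} (M : Matrix (Fin n) (Fin n) S) :
    Matrix (Fin (n - 1)) (Fin (n - 1)) S :=
  M.submatrix (fun k => ⟨(k : ℕ) + 1, by have := k.isLt; omega⟩)
    (fun k => ⟨(k : ℕ), by have := k.isLt; omega⟩)

/-- The image of the coefficient map (the pair of polynomials
`(det(X·I − A(i; ℓ, a)), det((X·I − A(i; ℓ, a))^{(1,n)}))`) of the path model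
with a leak in compartment `i`, over positive parameters `ℓ > 0`,
`a_1, …, a_{n-1} > 0`. -/
def coeffImage (n : ℕ) (i : ℕ) : Set (Polynomial ℝ × Polynomial ℝ) :=
  {p | ∃ (l : ℝ) (a : ℕ → ℝ), 0 < l ∧ (∀ k, 1 ≤ k → k ≤ n - 1 → 0 < a k) ∧
        p = ((charmatrix (pathLeak n i l a)).det,
             (minor1n (charmatrix (pathLeak n i l a))).det)}

/-!
The matrix `A(i; ℓ, a)` is lower bidiagonal, so `det (X·I − A)` is the product of `X − A_{kk}`,
and deleting row 1 and column n leaves an upper triangular matrix with diagonal `−a_1, …, −a_{n−1}`.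
Hence the coefficient pair only depends on the diagonal of `A` and on `a_1 ⋯ a_{n−1}`.
To move the leak from `i` to `j ≠ i` keep every `a_k` except
`a'_i = a_i + ℓ` and `a'_j = a_i a_j / (a_i + ℓ)`, and take `ℓ' = a_j ℓ / (a_i + ℓ)`:
then `a'_j + ℓ' = a_j` and `a'_i a'_j = a_i a_j`, so the diagonal and the product are unchanged,
and all new parameters are positive.
-/

section Triangular

variable {R : Type*} [CommRing R] {n i : ℕ} {l : R} {a : ℕ → R}

lemma pathLeak_apply_of_ne_of_ne {u v : Fin n} (hne : u ≠ v) (hsucc : (u : ℕ) ≠ v + 1) :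
    pathLeak n i l a u v = 0 := by
  simp [pathLeak, hne, hsucc]

lemma pathLeak_apply_succ {u v : Fin n} (huv : (u : ℕ) = v + 1) :
    pathLeak n i l a u v = a (v + 1) := by
  have hne : u ≠ v := fun h => by rw [h] at huv; omega
  simp [pathLeak, hne, huv]

lemma det_charmatrix_pathLeak :
    (charmatrix (pathLeak n i l a)).det = ∏ u : Fin n, (X - C (pathLeak n i l a u u)) := by
  rw [det_of_isLowerTriangular]
  · exact Finset.prod_congr rfl fun u _ => charmatrix_apply_eq _ _
  · intro u v huv
    replace huv : (u : ℕ) < v := huv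
    rw [charmatrix_apply_ne _ _ _ (by simp [Fin.ext_iff]; omega),
      pathLeak_apply_of_ne_of_ne (by simp [Fin.ext_iff]; omega) (by omega), map_zero, neg_zero]

lemma det_minor1n_charmatrix_pathLeak :
    (minor1n (charmatrix (pathLeak n i l a))).det = ∏ k ∈ Finset.Ico 1 n, -C (a k) := by
  rw [det_of_isUpperTriangular]
  · have hsucc (k : Fin (n - 1)) :
        minor1n (charmatrix (pathLeak n i l a)) k k = -C (a (k + 1)) :=
      (charmatrix_apply_ne _ _ _ (by simp [Fin.ext_iff])).trans
        (by rw [pathLeak_apply_succ rfl])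
    simp only [hsucc]
    rw [Fin.prod_univ_eq_prod_range (fun k => -C (a (k + 1))), Finset.prod_Ico_eq_prod_range]
    simp only [add_comm 1]
  · intro u v huv
    replace huv : (v : ℕ) < u := Fin.lt_def.mp huv
    exact (charmatrix_apply_ne _ _ _ (by simp [Fin.ext_iff]; omega)).trans
      (by rw [pathLeak_apply_of_ne_of_ne (by simp [Fin.ext_iff]; omega) (by simp; omega), map_zero,
        neg_zero])

end Triangular

section MoveLeak

noncomputable def movedLeakRate (i j : ℕ) (l : ℝ) (a : ℕ → ℝ) : ℝ :=
  a j * l / (a i + l)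

noncomputable def movedEdgeRates (i j : ℕ) (l : ℝ) (a : ℕ → ℝ) : ℕ → ℝ :=
  Function.update (Function.update a i (a i + l)) j (a i * a j / (a i + l))

variable {i j : ℕ} {l : ℝ} {a : ℕ → ℝ}

lemma movedEdgeRates_left (hij : i ≠ j) : movedEdgeRates i j l a i = a i + l := by
  simp [movedEdgeRates, hij]

lemma movedEdgeRates_right : movedEdgeRates i j l a j = a i * a j / (a i + l) := by
  simp [movedEdgeRates]

lemma movedEdgeRates_of_ne {k : ℕ} (hki : k ≠ i) (hkj : k ≠ j) :
    movedEdgeRates i j l a k = a k := by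
  simp [movedEdgeRates, hki, hkj]

lemma movedEdgeRates_right_add_movedLeakRate (hl : a i + l ≠ 0) :
    movedEdgeRates i j l a j + movedLeakRate i j l a = a j := by
  rw [movedEdgeRates_right, movedLeakRate]
  field_simp

lemma pathLeak_moved_apply_self (n : ℕ) (hij : i ≠ j) (hl : a i + l ≠ 0) (u : Fin n) :
    pathLeak n j (movedLeakRate i j l a) (movedEdgeRates i j l a) u u = pathLeak n i l a u u := by
  simp only [pathLeak, of_apply, if_true]
  split_ifs with hn hj hi hi
  · rfl
  · omega
  · rw [hj, ← movedEdgeRates_right_add_movedLeakRate hl]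
    ring
  · rw [hi, movedEdgeRates_left hij]
    ring
  · rw [movedEdgeRates_of_ne hi hj]

lemma prod_movedEdgeRates {s : Finset ℕ} (hi : i ∈ s) (hj : j ∈ s) (hij : i ≠ j)
    (hl : a i + l ≠ 0) : ∏ k ∈ s, movedEdgeRates i j l a k = ∏ k ∈ s, a k := by
  have hi' : i ∈ s \ {j} := by simp [hi, hij]
  rw [movedEdgeRates, Finset.prod_update_of_mem hj, Finset.prod_update_of_mem hi',
    Finset.prod_eq_mul_prod_sdiff_singleton_of_mem hj,
    Finset.prod_eq_mul_prod_sdiff_singleton_of_mem hi']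
  field_simp

end MoveLeak

lemma coeffImage_subset {n i j : ℕ} (hi1 : 1 ≤ i) (hi2 : i ≤ n - 1) (hj1 : 1 ≤ j)
    (hj2 : j ≤ n - 1) : coeffImage n i ⊆ coeffImage n j := by
  rintro _ ⟨l, a, hl, ha, rfl⟩
  obtain rfl | hij := eq_or_ne i j
  · exact ⟨l, a, hl, ha, rfl⟩
  have hai := ha i hi1 hi2
  have haj := ha j hj1 hj2
  have hail : 0 < a i + l := add_pos hai hl
  refine ⟨movedLeakRate i j l a, movedEdgeRates i j l a, div_pos (mul_pos haj hl) hail,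
    fun k hk1 hk2 => ?_, ?_⟩
  · by_cases hki : k = i
    · rw [hki, movedEdgeRates_left hij]
      exact hail
    by_cases hkj : k = j
    · rw [hkj, movedEdgeRates_right]
      exact div_pos (mul_pos hai haj) hail
    rw [movedEdgeRates_of_ne hki hkj]
    exact ha k hk1 hk2
  · simp only [det_charmatrix_pathLeak, det_minor1n_charmatrix_pathLeak,
      pathLeak_moved_apply_self n hij hail.ne', Finset.prod_neg, ← map_prod,
      prod_movedEdgeRates (s := Finset.Ico 1 n) (by simp; omega) (by simp; omega) hij hail.ne']

theorem pathLeak_indistinguishable_general (n : ℕ) (i j : ℕ)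
    (hi1 : 1 ≤ i) (hi2 : i ≤ n - 1) (hj1 : 1 ≤ j) (hj2 : j ≤ n - 1) :
    coeffImage n i = coeffImage n j :=
  (coeffImage_subset hi1 hi2 hj1 hj2).antisymm (coeffImage_subset hj1 hj2 hi1 hi2)

/-- Theorem (indistinguishability of the path models with a leak in compartment
`i`, resp. `j`): the images of their coefficient maps over positive parameters
coincide. -/
theorem pathLeak_indistinguishable (n : ℕ) (hn : 2 ≤ n) (i j : ℕ)
    (hi1 : 1 ≤ i) (hi2 : i ≤ n - 1) (hj1 : 1 ≤ j) (hj2 : j ≤ n - 1) :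
    coeffImage n i = coeffImage n j :=
  pathLeak_indistinguishable_general n i j hi1 hi2 hj1 hj2
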